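/- arXiv:0809.4627 — 7 statements merged into one kernel-verified Lean document; each statement's English description precedes it below -/
import Mathlib

section
/- Let n ≥ 2 and let P = (p_ij) be an n×n matrix with positive entries summing to n², at which the function L(P) = ∏_i p_ii² · ∏_{i≠j} p_ij attains its maximum over all nonnegative n×n matrices of rank at most 2 with entries summing to n². Then every row sum and every column sum of P equals n. -/
open Finset

/-- The likelihood function `L(P) = ∏ i p_ii² · ∏_{i≠j} p_ij`. -/
noncomputable def swissL {n : ℕ} (P : Matrix (Fin n) (Fin n) ℝ) : ℝ :=
  (∏ i, (P i i) ^ 2) * ∏ p ∈ Finset.univ.offDiag, P p.1 p.2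

/-!
Rescaling row `i` of a maximiser `P` by `n / sᵢ`, where `sᵢ` is its row sum, keeps the rank and the
total sum and multiplies `L` by `(nⁿ / ∏ sᵢ) ^ (n + 1)`, since every row carries exactly `n + 1`
factors of `L`. By strict AM-GM this factor exceeds `1` unless all `sᵢ = n`, contradicting
maximality. Column sums follow by transposing, as `L(Pᵀ) = L(P)`.
-/

open Matrix

theorem Real.prod_lt_pow_card_of_exists_ne {ι : Type*} [Fintype ι] {s : ι → ℝ} {a : ℝ}
    (hs : ∀ i, 0 < s i) (hsum : ∑ i, s i = Fintype.card ι * a) (hne : ∃ j, s j ≠ a) :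
    ∏ i, s i < a ^ Fintype.card ι := by
  obtain ⟨j, hj⟩ := hne
  have hcard : Fintype.card ι ≠ 0 := (Fintype.card_pos_iff.mpr ⟨j⟩).ne'
  have hcard' : (Fintype.card ι : ℝ) ≠ 0 := Nat.cast_ne_zero.mpr hcard
  have hmean : ∑ i, (Fintype.card ι : ℝ)⁻¹ * s i = a := by
    rw [← mul_sum, hsum, inv_mul_cancel_left₀ hcard']
  have hw : ∑ _i : ι, (Fintype.card ι : ℝ)⁻¹ = 1 := by
    rw [sum_const, card_univ, nsmul_eq_mul, mul_inv_cancel₀ hcard']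
  have hamgm := (Real.geom_mean_lt_arith_mean_weighted_iff_of_pos' univ _ s
    (fun _ _ => by positivity) hw (fun i _ => (hs i).le)).mpr ⟨j, mem_univ j, hmean ▸ hj⟩
  rw [hmean, Real.finsetProd_rpow _ _ (fun i _ => (hs i).le)] at hamgm
  calc ∏ i, s i = ((∏ i, s i) ^ (Fintype.card ι : ℝ)⁻¹) ^ Fintype.card ι :=
        (Real.rpow_inv_natCast_pow (prod_nonneg fun i _ => (hs i).le) hcard).symm
    _ < a ^ Fintype.card ι :=
      pow_lt_pow_left₀ hamgm (Real.rpow_nonneg (prod_nonneg fun i _ => (hs i).le) _) hcard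

theorem Matrix.sum_sum_transpose {ι α : Type*} [Fintype ι] [AddCommMonoid α] (P : Matrix ι ι α) :
    ∑ i, ∑ j, Pᵀ i j = ∑ i, ∑ j, P i j :=
  sum_comm

section

variable {n : ℕ}

theorem swissL_eq_prod_diag_mul_prod (P : Matrix (Fin n) (Fin n) ℝ) :
    swissL P = (∏ i, P i i) * ∏ i, ∏ j, P i j := by
  rw [swissL, prod_pow, sq, mul_assoc, ← prod_product' (f := P), ← diag_union_offDiag,
    prod_union (disjoint_diag_offDiag _), prod_diag]

theorem swissL_transpose (P : Matrix (Fin n) (Fin n) ℝ) : swissL Pᵀ = swissL P := by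
  simp only [swissL_eq_prod_diag_mul_prod, transpose_apply, prod_comm (s := univ) (t := univ)]

theorem swissL_diagonal_mul (c : Fin n → ℝ) (P : Matrix (Fin n) (Fin n) ℝ) :
    swissL (diagonal c * P) = (∏ i, c i) ^ (n + 1) * swissL P := by
  simp only [swissL_eq_prod_diag_mul_prod, diagonal_mul, prod_mul_distrib, prod_const, card_univ,
    Fintype.card_fin, prod_pow]
  ring

theorem swissL_pos {P : Matrix (Fin n) (Fin n) ℝ} (hpos : ∀ i j, 0 < P i j) : 0 < swissL P := by
  rw [swissL_eq_prod_diag_mul_prod]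
  exact mul_pos (prod_pos fun i _ => hpos i i) (prod_pos fun i _ => prod_pos fun j _ => hpos i j)

def MaximizesSwissLOfRankLE (r : ℕ) (P : Matrix (Fin n) (Fin n) ℝ) : Prop :=
  ∀ Q : Matrix (Fin n) (Fin n) ℝ,
    (∀ i j, 0 ≤ Q i j) → ∑ i, ∑ j, Q i j = (n : ℝ) ^ 2 → Q.rank ≤ r → swissL Q ≤ swissL P

namespace MaximizesSwissLOfRankLE

variable {r : ℕ} {P : Matrix (Fin n) (Fin n) ℝ}

theorem transpose (hmax : MaximizesSwissLOfRankLE r P) : MaximizesSwissLOfRankLE r Pᵀ := by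
  intro Q hQ_nonneg hQ_sum hQ_rank
  rw [← swissL_transpose Q, swissL_transpose P]
  exact hmax Qᵀ (fun i j => hQ_nonneg j i) (by rwa [sum_sum_transpose]) (by rwa [rank_transpose])

theorem sum_row_eq (hmax : MaximizesSwissLOfRankLE r P) (hpos : ∀ i j, 0 < P i j)
    (hsum : ∑ i, ∑ j, P i j = (n : ℝ) ^ 2) (hrank : P.rank ≤ r) (i : Fin n) :
    ∑ j, P i j = n := by
  by_contra! hne
  set s : Fin n → ℝ := fun i => ∑ j, P i j
  have hs : ∀ i, 0 < s i := fun i => sum_pos (fun j _ => hpos i j) ⟨i, mem_univ i⟩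
  have hprod : ∏ i, s i < (n : ℝ) ^ n := by
    simpa using Real.prod_lt_pow_card_of_exists_ne hs (by simp [s, hsum, sq]) ⟨i, hne⟩
  set c : Fin n → ℝ := fun i => n / s i
  set Q := diagonal c * P
  have hQ_row : ∀ i, ∑ j, Q i j = n := fun i => by
    simp only [Q, c, diagonal_mul, ← mul_sum, div_mul_cancel₀ _ (hs i).ne', s]
  have hQ_nonneg : ∀ i j, 0 ≤ Q i j := fun i j => by
    simp only [Q, c, diagonal_mul]
    exact mul_nonneg (div_nonneg n.cast_nonneg (hs i).le) (hpos i j).le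
  have hQ_sum : ∑ i, ∑ j, Q i j = (n : ℝ) ^ 2 := by simp [hQ_row, sq]
  have hQ_rank : Q.rank ≤ r := (rank_mul_le_right _ _).trans hrank
  have hc : 1 < ∏ i, c i := by
    rw [prod_div_distrib, prod_const, card_univ, Fintype.card_fin,
      one_lt_div (prod_pos fun i _ => hs i)]
    exact hprod
  have hgain : swissL P < swissL Q := by
    rw [swissL_diagonal_mul]
    exact lt_mul_left (swissL_pos hpos) (one_lt_pow₀ hc n.succ_ne_zero)
  exact (hmax Q hQ_nonneg hQ_sum hQ_rank).not_gt hgain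

end MaximizesSwissLOfRankLE

end

theorem stmt_0_general {n : ℕ} (P : Matrix (Fin n) (Fin n) ℝ)
    (hpos : ∀ i j, 0 < P i j)
    (hsum : ∑ i, ∑ j, P i j = (n : ℝ) ^ 2)
    (hrank : P.rank ≤ 2)
    (hmax : ∀ Q : Matrix (Fin n) (Fin n) ℝ,
      (∀ i j, 0 ≤ Q i j) → (∑ i, ∑ j, Q i j = (n : ℝ) ^ 2) → Q.rank ≤ 2 →
      swissL Q ≤ swissL P) :
    (∀ i, ∑ j, P i j = (n : ℝ)) ∧ (∀ j, ∑ i, P i j = (n : ℝ)) := by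
  have hmax' : MaximizesSwissLOfRankLE 2 P := hmax
  refine ⟨hmax'.sum_row_eq hpos hsum hrank, fun j => ?_⟩
  simpa only [transpose_apply] using hmax'.transpose.sum_row_eq (fun i j => hpos j i) (by rwa [sum_sum_transpose])
    (by rwa [rank_transpose]) j

theorem stmt_0 {n : ℕ} (hn : 2 ≤ n) (P : Matrix (Fin n) (Fin n) ℝ)
    (hpos : ∀ i j, 0 < P i j)
    (hsum : ∑ i, ∑ j, P i j = (n : ℝ) ^ 2)
    (hrank : P.rank ≤ 2)
    (hmax : ∀ Q : Matrix (Fin n) (Fin n) ℝ,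
      (∀ i j, 0 ≤ Q i j) → (∑ i, ∑ j, Q i j = (n : ℝ) ^ 2) → Q.rank ≤ 2 →
      swissL Q ≤ swissL P) :
    (∀ i, ∑ j, P i j = (n : ℝ)) ∧ (∀ j, ∑ i, P i j = (n : ℝ)) :=
  stmt_0_general P hpos hsum hrank hmax
end

section
/- Let P be an n×n real matrix of rank at most 2 with all row sums and all column sums equal to n. Then there exist real vectors a = (a_1,…,a_n) and b = (b_1,…,b_n) such that p_ij = 1 + a_j b_i for all i,j, and (∑_i a_i)(∑_i b_i) = 0. -/
/-!
Let `J` be the all-ones matrix and `Q = P - J`. Since `P J = n J`, we have `Q = P (1 - J / n)`, so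
the range of `Q` lies in that of `P`; and `Q` has zero column sums, so every vector in its range
has coordinate sum `0`. The all-ones vector `P (𝟙 / n)` lies in the range of `P` but not in that of
`Q`, whence `rank Q < rank P ≤ 2`. A matrix of rank at most one is an outer product `Q = b aᵀ`, and
the zero column sums of `Q` give `(∑ b) a = 0`.
-/

open Finset Matrix

theorem Matrix.exists_eq_vecMulVec_of_rank_le_one {K m n : Type*} [Field K] [Fintype n]
    (M : Matrix m n K) (h : M.rank ≤ 1) : ∃ (b : m → K) (a : n → K), M = vecMulVec b a := by
  obtain ⟨b, -, hb⟩ := (rank_submodule_le_one_iff (LinearMap.range M.mulVecLin)).1 <| by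
    rw [← Module.finrank_eq_rank]
    exact_mod_cast h
  have hcol (j : n) : ∃ c : K, c • b = M.col j :=
    Submodule.mem_span_singleton.1 <| hb <| M.range_mulVecLin ▸ Submodule.subset_span ⟨j, rfl⟩
  choose a ha using hcol
  refine ⟨b, a, Matrix.ext fun i j => ?_⟩
  rw [vecMulVec_apply, mul_comm, ← smul_eq_mul, ← Pi.smul_apply, ha, col_apply]

section AllOnes

variable {K ι : Type*} [Field K] [Fintype ι] {P : Matrix ι ι K}

theorem Matrix.mul_allOnes (hrow : ∀ i, ∑ j, P i j = Fintype.card ι) :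
    P * of (fun _ _ => 1) = (Fintype.card ι : K) • of fun _ _ => 1 := by
  ext i j
  simp [mul_apply, hrow]

theorem Matrix.one_vecMul_sub_allOnes (hcol : ∀ j, ∑ i, P i j = Fintype.card ι) :
    1 ᵥ* (P - of fun _ _ => 1) = 0 := by
  ext j
  simp [vecMul, dotProduct, Finset.sum_sub_distrib, hcol]

theorem Matrix.one_mem_range_mulVecLin (hrow : ∀ i, ∑ j, P i j = Fintype.card ι)
    (hι : (Fintype.card ι : K) ≠ 0) : 1 ∈ LinearMap.range P.mulVecLin := by
  refine ⟨(Fintype.card ι : K)⁻¹ • 1, ?_⟩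
  rw [mulVecLin_apply, mulVec_smul]
  ext i
  simp [mulVec, dotProduct, hrow, hι]

theorem Matrix.range_mulVecLin_sub_allOnes_le [DecidableEq ι]
    (hrow : ∀ i, ∑ j, P i j = Fintype.card ι) (hι : (Fintype.card ι : K) ≠ 0) :
    LinearMap.range (P - of fun _ _ => 1).mulVecLin ≤ LinearMap.range P.mulVecLin := by
  have hfactor : P - of (fun _ _ => 1) = P * (1 - (Fintype.card ι : K)⁻¹ • of fun _ _ => 1) := by
    rw [mul_sub, mul_one, mul_smul_comm, mul_allOnes hrow, smul_smul, inv_mul_cancel₀ hι, one_smul]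
  rw [hfactor, mulVecLin_mul]
  exact LinearMap.range_comp_le_range _ _

theorem Matrix.one_notMem_range_mulVecLin_sub_allOnes
    (hcol : ∀ j, ∑ i, P i j = Fintype.card ι) (hι : (Fintype.card ι : K) ≠ 0) :
    1 ∉ LinearMap.range (P - of fun _ _ => 1).mulVecLin := by
  rintro ⟨x, hx⟩
  have hsum := dotProduct_mulVec 1 (P - of fun _ _ => 1) x
  rw [mulVecLin_apply] at hx
  rw [one_vecMul_sub_allOnes hcol, zero_dotProduct, hx, one_dotProduct_one] at hsum
  exact hι hsum

theorem Matrix.rank_sub_allOnes_lt [DecidableEq ι] (hrow : ∀ i, ∑ j, P i j = Fintype.card ι)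
    (hcol : ∀ j, ∑ i, P i j = Fintype.card ι) (hι : (Fintype.card ι : K) ≠ 0) :
    (P - of fun _ _ => 1).rank < P.rank :=
  Submodule.finrank_lt_finrank_of_lt <| SetLike.lt_iff_le_and_exists.2
    ⟨range_mulVecLin_sub_allOnes_le hrow hι, 1, one_mem_range_mulVecLin hrow hι,
      one_notMem_range_mulVecLin_sub_allOnes hcol hι⟩

end AllOnes

theorem stmt_2 {n : ℕ} (P : Matrix (Fin n) (Fin n) ℝ)
    (hrank : P.rank ≤ 2)
    (hrow : ∀ i, ∑ j, P i j = (n : ℝ))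
    (hcol : ∀ j, ∑ i, P i j = (n : ℝ)) :
    ∃ a b : Fin n → ℝ,
      (∀ i j, P i j = 1 + a j * b i) ∧ (∑ i, a i) * (∑ i, b i) = 0 := by
  rcases Nat.eq_zero_or_pos n with rfl | hn
  · exact ⟨0, 0, fun i => i.elim0, by simp⟩
  replace hrow i : ∑ j, P i j = Fintype.card (Fin n) := by rw [hrow, Fintype.card_fin]
  replace hcol j : ∑ i, P i j = Fintype.card (Fin n) := by rw [hcol, Fintype.card_fin]
  have hι : (Fintype.card (Fin n) : ℝ) ≠ 0 := by
    rw [Fintype.card_fin]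
    exact Nat.cast_ne_zero.2 hn.ne'
  obtain ⟨b, a, hQ⟩ := (P - of fun _ _ => 1).exists_eq_vecMulVec_of_rank_le_one <| by
    have hlt := rank_sub_allOnes_lt hrow hcol hι
    omega
  refine ⟨a, b, fun i j => ?_, ?_⟩
  · have hij := congrFun₂ hQ i j
    simp only [Matrix.sub_apply, of_apply, vecMulVec_apply] at hij
    linarith
  · have hsum := one_vecMul_sub_allOnes hcol
    rw [hQ, vecMul_vecMulVec, one_dotProduct, smul_eq_zero] at hsum
    rcases hsum with hb | rfl
    · rw [hb, mul_zero]
    · simp only [Pi.zero_apply, sum_const_zero, zero_mul]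
end

section
/- Let P be an n×n matrix with positive entries of the form p_ij = 1 + a_j b_i maximizing L(P) = ∏_i p_ii² ∏_{i≠j} p_ij over matrices of this form with fixed a-vector and with b-vectors that are permutations of (b_1,…,b_n). Then for all i, j: a_i > a_j implies b_i ≥ b_j. -/
/-!
`L(P)` is the product of all entries of `P` times the product of its diagonal. Permuting the
rows of `P` leaves the first factor unchanged, so optimality says that `∏ₖ (1 + aₖ b_{σ k})` is
largest at `σ = id`. Comparing with the transposition of `i` and `j` gives
`(1 + aᵢ bⱼ)(1 + aⱼ bᵢ) ≤ (1 + aᵢ bᵢ)(1 + aⱼ bⱼ)`, which expands to `0 ≤ (aᵢ - aⱼ)(bᵢ - bⱼ)`.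
-/

open Finset

theorem swissL_eq_prod_mul_prod_diag {n : ℕ} (M : Matrix (Fin n) (Fin n) ℝ) :
    swissL M = (∏ i, ∏ j, M i j) * ∏ i, M i i := by
  have hsplit : ∏ i, ∏ j, M i j = (∏ i, M i i) * ∏ p ∈ univ.offDiag, M p.1 p.2 := by
    rw [← prod_diag univ fun p => M p.1 p.2, ← prod_union (disjoint_diag_offDiag _),
      diag_union_offDiag, prod_product]
  rw [swissL, hsplit, prod_pow]
  ring

theorem Fintype.prod_swap_diag_mul {ι M : Type*} [Fintype ι] [DecidableEq ι] [CommMonoid M]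
    (g : ι → ι → M) {i j : ι} (hij : i ≠ j) :
    (∏ k, g (Equiv.swap i j k) k) * (g i i * g j j) = (∏ k, g k k) * (g j i * g i j) := by
  have hfix : ∀ h : ι → M, ∏ k, h k = h i * h j * ∏ k ∈ {i, j}ᶜ, h k := fun h => by
    rw [← prod_pair hij, prod_mul_prod_compl]
  have hrest : ∏ k ∈ {i, j}ᶜ, g (Equiv.swap i j k) k = ∏ k ∈ {i, j}ᶜ, g k k :=
    Finset.prod_congr rfl fun k hk => by
      simp only [mem_compl, mem_insert, mem_singleton, not_or] at hk
      rw [Equiv.swap_apply_of_ne_of_ne hk.1 hk.2]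
  rw [hfix, hfix fun k => g k k, hrest, Equiv.swap_apply_left, Equiv.swap_apply_right]
  ac_rfl

theorem swissL_of_comp_perm {n : ℕ} (f : Fin n → Fin n → ℝ) (σ : Equiv.Perm (Fin n)) :
    swissL (Matrix.of fun i j => f (σ i) j) = (∏ i, ∏ j, f i j) * ∏ k, f (σ k) k := by
  rw [swissL_eq_prod_mul_prod_diag]
  simp only [Matrix.of_apply]
  rw [Equiv.prod_comp σ fun i => ∏ j, f i j]

theorem stmt_10 {n : ℕ} (a b : Fin n → ℝ)
    (hpos : ∀ i j, 0 < 1 + a j * b i)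
    (hmax : ∀ σ : Equiv.Perm (Fin n),
      swissL (Matrix.of fun i j => 1 + a j * b (σ i)) ≤
      swissL (Matrix.of fun i j => 1 + a j * b i)) :
    ∀ i j, a i > a j → b i ≥ b j := by
  intro i j hij
  set f : Fin n → Fin n → ℝ := fun r c => 1 + a c * b r with hf
  have hdiag : ∏ k, f (Equiv.swap i j k) k ≤ ∏ k, f k k := by
    have h := hmax (Equiv.swap i j)
    rw [swissL_of_comp_perm f, swissL_eq_prod_mul_prod_diag] at h
    simp only [Matrix.of_apply] at h
    exact le_of_mul_le_mul_left h (prod_pos fun r _ => prod_pos fun c _ => hpos r c)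
  have hexchange : f j i * f i j ≤ f i i * f j j := by
    refine le_of_mul_le_mul_left ?_ (prod_pos fun k _ => hpos k k : 0 < ∏ k, f k k)
    rw [← Fintype.prod_swap_diag_mul f (ne_of_apply_ne a hij.ne')]
    exact mul_le_mul_of_nonneg_right hdiag (mul_pos (hpos i i) (hpos j j)).le
  have hcross : 0 ≤ (a i - a j) * (b i - b j) := by
    simp only [hf] at hexchange
    linarith
  exact sub_nonneg.mp (nonneg_of_mul_nonneg_right hcross (sub_pos.mpr hij))
end

section
/- Let A_1 ≥ A_2 ≥ 1 and A_3 ≥ A_4 > 0 be reals with A_1 + A_2 + A_3 + A_4 = 4 and 2/A_1 + 1/A_2 + 1/A_3 + 1/A_4 = 5. Then A_1 ≤ 3/2. -/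
/-!
Write `A₃ + A₄ = 4 - A₁ - A₂`. By AM-HM, `1/A₃ + 1/A₄ ≥ 4/(4 - A₁ - A₂)`, and
`x ↦ 1/x + 4/(c - x)` is nondecreasing on `[c/3, c)`, so with `c = 4 - A₁ ≤ 3` the constraint
gives `2/A₁ + 1 + 4/(3 - A₁) ≤ 5`, i.e. `(A₁ - 1)(2A₁ - 3) ≤ 0`.
-/

theorem four_div_add_le_one_div_add_one_div {a b : ℝ} (ha : 0 < a) (hb : 0 < b) :
    4 / (a + b) ≤ 1 / a + 1 / b := by
  rw [div_add_div _ _ ha.ne' hb.ne', div_le_div_iff₀ (by positivity) (by positivity)]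
  nlinarith [sq_nonneg (a - b)]

theorem one_add_four_div_sub_one_le {c x : ℝ} (hc : c ≤ 3) (hx : 1 ≤ x) (hxc : x < c) :
    1 + 4 / (c - 1) ≤ 1 / x + 4 / (c - x) := by
  have hx0 : 0 < x := by linarith
  have hcx : 0 < c - x := by linarith
  have hc1 : 0 < c - 1 := by linarith
  rw [div_add_div _ _ hx0.ne' hcx.ne', one_add_div hc1.ne',
    div_le_div_iff₀ hc1 (by positivity)]
  have hslope : (c - x) * (c - 1) ≤ 4 * x := by nlinarith
  nlinarith [mul_nonneg (sub_nonneg.2 hx) (sub_nonneg.2 hslope)]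

theorem le_three_halves_of_two_div_add_four_div_le {a : ℝ} (ha : 0 < a) (ha3 : a < 3)
    (h : 2 / a + 1 + 4 / (3 - a) ≤ 5) : a ≤ 3 / 2 := by
  have h3a : 0 < 3 - a := by linarith
  rw [div_add_one ha.ne', div_add_div _ _ ha.ne' h3a.ne', div_le_iff₀ (by positivity)] at h
  nlinarith

theorem stmt_11 (A₁ A₂ A₃ A₄ : ℝ)
    (h12 : A₂ ≤ A₁) (h2 : 1 ≤ A₂) (h34 : A₄ ≤ A₃) (h4 : 0 < A₄)
    (hsum : A₁ + A₂ + A₃ + A₄ = 4)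
    (heq : 2 / A₁ + 1 / A₂ + 1 / A₃ + 1 / A₄ = 5) :
    A₁ ≤ 3 / 2 := by
  have h3 : 0 < A₃ := h4.trans_le h34
  have hamhm := four_div_add_le_one_div_add_one_div h3 h4
  have hmono := one_add_four_div_sub_one_le (c := 4 - A₁) (x := A₂) (by linarith) h2 (by linarith)
  rw [show A₃ + A₄ = 4 - A₁ - A₂ by linarith] at hamhm
  rw [show 4 - A₁ - 1 = 3 - A₁ by ring] at hmono
  exact le_three_halves_of_two_div_add_four_div_le (by linarith) (by linarith) (by linarith)
end

section
/- Let A_1 ≥ A_2 ≥ 1 and A_3 ≥ A_4 > 0 be reals with A_1 + A_2 + A_3 + A_4 = 4 and 2/A_1 + 1/A_2 + 1/A_3 + 1/A_4 = 5. Then A_2 ≤ 6/5. -/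
/-!
By the harmonic–arithmetic mean inequality, `1/A₃ + 1/A₄ ≥ 4/(A₃ + A₄) = 4/(4 - A₁ - A₂)`, so the
constraint forces `5 - 2/A₁ - 1/A₂ ≥ 4/(4 - A₁ - A₂)`. Once `A₁ ≥ A₂ > 6/5` this fails, with
equality exactly at the boundary point `A₁ = A₂ = 6/5`.
-/

theorem four_div_add_le_inv_add_inv {x y : ℝ} (hx : 0 < x) (hy : 0 < y) :
    4 / (x + y) ≤ 1 / x + 1 / y := by
  rw [div_add_div _ _ hx.ne' hy.ne', div_le_div_iff₀ (by positivity) (by positivity)]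
  nlinarith [sq_nonneg (x - y)]

theorem five_sub_two_div_sub_one_div_lt_four_div {a b : ℝ} (hb : 6 / 5 < b) (hab : b ≤ a)
    (hs : a + b < 4) : 5 - 2 / a - 1 / b < 4 / (4 - a - b) := by
  have ha : 0 < a := by linarith
  have hb0 : 0 < b := by linarith
  have hrw : 5 - 2 / a - 1 / b = (5 * a * b - 2 * b - a) / (a * b) := by
    field_simp
  rw [hrw, div_lt_div_iff₀ (by positivity) (by linarith)]
  nlinarith [mul_pos (sub_pos.mpr hb) (sub_pos.mpr (hb.trans_le hab)), sq_nonneg (a - b),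
    mul_pos (sub_pos.mpr hs) (mul_pos (sub_pos.mpr hb) (sub_pos.mpr (hb.trans_le hab)))]

theorem stmt_12_general (A₁ A₂ A₃ A₄ : ℝ)
    (h12 : A₂ ≤ A₁) (h34 : A₄ ≤ A₃) (h4 : 0 < A₄)
    (hsum : A₁ + A₂ + A₃ + A₄ = 4)
    (heq : 2 / A₁ + 1 / A₂ + 1 / A₃ + 1 / A₄ = 5) :
    A₂ ≤ 6 / 5 := by
  by_contra! hA₂
  have hA₃ : 0 < A₃ := h4.trans_le h34
  have hamhm : 4 / (4 - A₁ - A₂) ≤ 1 / A₃ + 1 / A₄ := by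
    rw [show 4 - A₁ - A₂ = A₃ + A₄ by linarith]
    exact four_div_add_le_inv_add_inv hA₃ h4
  have hlt := five_sub_two_div_sub_one_div_lt_four_div hA₂ h12 (by linarith)
  linarith

theorem stmt_12 (A₁ A₂ A₃ A₄ : ℝ)
    (h12 : A₂ ≤ A₁) (h2 : 1 ≤ A₂) (h34 : A₄ ≤ A₃) (h4 : 0 < A₄)
    (hsum : A₁ + A₂ + A₃ + A₄ = 4)
    (heq : 2 / A₁ + 1 / A₂ + 1 / A₃ + 1 / A₄ = 5) :
    A₂ ≤ 6 / 5 :=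
  stmt_12_general A₁ A₂ A₃ A₄ h12 h34 h4 hsum heq
end

section
/- Let a_1, a_2, a_3, a_4 be reals with a_1 + a_2 + a_3 + a_4 = 0 and 1 + a_i a_j > 0 for all i,j, satisfying ∑_{j=1}^4 1/(1 + a_i a_j) + 1/(1 + a_i²) = 5 for each i = 1,…,4. Then for any i, j with a_i a_j > 0, we have a_i = a_j. -/
/-!
Fix a pair `u = a i`, `v = a j` with `u * v > 0` and let `s`, `t` be the other two entries, so that
`s + t = -(u + v)`. Writing `q = u v` and `g = s t`, the two terms `1/(1 + w s) + 1/(1 + w t)` of the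
equation at `w ∈ {u, v}` combine into a function of `w²`, `q` and `g` alone, and clearing
denominators turns the equation into a quadratic in `y = w²` whose coefficients depend only on
`q` and `g`. If `u ≠ v` then `u² ≠ v²`, so `u²` and `v²` are its two roots, and Vieta's formulas
determine `g` and `u² + v²` in terms of `q`. The resulting values violate `(s + t)² ≥ 4 s t`.
-/

open Finset

theorem Fintype.exists_sum_eq_add_add_add {ι M : Type*} [Fintype ι] [DecidableEq ι]
    [AddCommMonoid M] (hcard : Fintype.card ι = 4) {i j : ι} (hij : i ≠ j) :
    ∃ k l, ∀ f : ι → M, ∑ m, f m = f i + f j + f k + f l := by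
  have hj : j ∈ univ.erase i := mem_erase.mpr ⟨hij.symm, mem_univ j⟩
  have hcard₂ : ((univ.erase i).erase j).card = 2 := by
    rw [card_erase_of_mem hj, card_erase_of_mem (mem_univ i), card_univ, hcard]
  obtain ⟨k, l, hkl, hrest⟩ := card_eq_two.mp hcard₂
  refine ⟨k, l, fun f => ?_⟩
  rw [← add_sum_erase _ f (mem_univ i), ← add_sum_erase _ f hj, hrest, sum_pair hkl]
  simp only [add_assoc]

theorem vieta_of_quadratic_eq_zero {R : Type*} [CommRing R] [IsDomain R] {a b c y₁ y₂ : R}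
    (h₁ : a * y₁ ^ 2 + b * y₁ + c = 0) (h₂ : a * y₂ ^ 2 + b * y₂ + c = 0) (hne : y₁ ≠ y₂) :
    a * (y₁ + y₂) + b = 0 ∧ a * (y₁ * y₂) = c := by
  have hsub : y₁ - y₂ ≠ 0 := sub_ne_zero.mpr hne
  constructor
  · refine (mul_eq_zero.mp ?_).resolve_left hsub
    linear_combination h₁ - h₂
  · refine sub_eq_zero.mp ((mul_eq_zero.mp ?_).resolve_left hsub)
    linear_combination y₂ * h₁ - y₁ * h₂

theorem quadratic_of_eq_five {q g y : ℝ} (hq : 1 + q ≠ 0) (hy : 1 + y ≠ 0)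
    (hD : 1 - q + y * (g - 1) ≠ 0)
    (h : 1 / (1 + q) + (2 - q - y) / (1 - q + y * (g - 1)) + 2 / (1 + y) = 5) :
    (3 + 4 * q - (4 + 5 * q) * g) * y ^ 2 + (4 * q ^ 2 + 2 * q - 1 - (2 + 3 * q) * g) * y
      + 2 * q ^ 2 = 0 := by
  field_simp at h
  linear_combination h

theorem quadratic_of_sum_inv_eq_five {w z s t : ℝ} (hsum : w + z + s + t = 0)
    (hwz : 1 + w * z ≠ 0) (hws : 1 + w * s ≠ 0) (hwt : 1 + w * t ≠ 0)
    (h : 1 / (1 + w * z) + 1 / (1 + w * s) + 1 / (1 + w * t) + 2 / (1 + w ^ 2) = 5) :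
    (3 + 4 * (w * z) - (4 + 5 * (w * z)) * (s * t)) * (w ^ 2) ^ 2
      + (4 * (w * z) ^ 2 + 2 * (w * z) - 1 - (2 + 3 * (w * z)) * (s * t)) * w ^ 2
      + 2 * (w * z) ^ 2 = 0 := by
  have hprod : (1 + w * s) * (1 + w * t) = 1 - w * z + w ^ 2 * (s * t - 1) := by
    linear_combination w * hsum
  have hpair : 1 / (1 + w * s) + 1 / (1 + w * t)
      = (2 - w * z - w ^ 2) / (1 - w * z + w ^ 2 * (s * t - 1)) := by
    rw [div_add_div _ _ hws hwt, hprod]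
    congr 1
    linear_combination w * hsum
  refine quadratic_of_eq_five hwz (by positivity) (hprod ▸ mul_ne_zero hws hwt) ?_
  linear_combination h - hpair

theorem eq_of_sum_inv_eq_five {u v s t : ℝ} (hsum : u + v + s + t = 0) (huv : 0 < u * v)
    (hus : 1 + u * s ≠ 0) (hut : 1 + u * t ≠ 0) (hvs : 1 + v * s ≠ 0) (hvt : 1 + v * t ≠ 0)
    (hu : 1 / (1 + u * v) + 1 / (1 + u * s) + 1 / (1 + u * t) + 2 / (1 + u ^ 2) = 5)
    (hv : 1 / (1 + v * u) + 1 / (1 + v * s) + 1 / (1 + v * t) + 2 / (1 + v ^ 2) = 5) :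
    u = v := by
  by_contra hne
  have hsq : u ^ 2 ≠ v ^ 2 := by
    rintro h
    rcases sq_eq_sq_iff_eq_or_eq_neg.mp h with h | rfl
    · exact hne h
    · nlinarith [sq_nonneg v]
  have hqu := quadratic_of_sum_inv_eq_five hsum (by positivity) hus hut hu
  have hqv := quadratic_of_sum_inv_eq_five (by linear_combination hsum)
    (by rw [mul_comm]; positivity) hvs hvt hv
  rw [mul_comm v u] at hqv
  obtain ⟨hS, hP⟩ := vieta_of_quadratic_eq_zero hqu hqv hsq
  have hg : (4 + 5 * (u * v)) * (s * t) = 1 + 4 * (u * v) := by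
    have : (u * v) ^ 2 * ((4 + 5 * (u * v)) * (s * t) - (1 + 4 * (u * v))) = 0 := by
      linear_combination -hP
    linear_combination (mul_eq_zero.mp this).resolve_left (by positivity)
  have hst : 4 * (s * t) ≤ (u + v) ^ 2 := by
    rw [show u + v = -(s + t) by linear_combination hsum]
    nlinarith [sq_nonneg (s - t)]
  -- eliminating `s * t` and `u² + v²` by `hg` and `hS` turns `hst` into `2 + 8q - 6q² + 20q³ ≤ 0`,
  -- where `q = u * v`
  have hcubic : 0 < 2 + 8 * (u * v) - 6 * (u * v) ^ 2 + 20 * (u * v) ^ 3 := by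
    nlinarith [sq_nonneg (u * v), sq_nonneg (u * v - 1)]
  nlinarith [mul_le_mul_of_nonneg_left hst (by positivity : (0 : ℝ) ≤ 4 + 5 * (u * v))]

theorem stmt_15 (a : Fin 4 → ℝ)
    (hsum : ∑ i, a i = 0)
    (hpos : ∀ i j, 0 < 1 + a i * a j)
    (heq : ∀ i, (∑ j, 1 / (1 + a i * a j)) + 1 / (1 + (a i) ^ 2) = 5) :
    ∀ i j, 0 < a i * a j → a i = a j := by
  intro i j hij
  rcases eq_or_ne i j with rfl | hne
  · rfl
  obtain ⟨k, l, hsplit⟩ := Fintype.exists_sum_eq_add_add_add (M := ℝ) (Fintype.card_fin 4) hne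
  have hrow : ∀ m, 1 / (1 + a m * a i) + 1 / (1 + a m * a j) + 1 / (1 + a m * a k)
      + 1 / (1 + a m * a l) + 1 / (1 + a m ^ 2) = 5 := fun m => by
    simpa only [hsplit] using heq m
  have hsq : ∀ m, 1 / (1 + a m * a m) = 1 / (1 + a m ^ 2) := fun m => by ring
  refine eq_of_sum_inv_eq_five (hsplit a ▸ hsum) hij (hpos i k).ne' (hpos i l).ne'
    (hpos j k).ne' (hpos j l).ne' ?_ ?_
  · linear_combination hrow i + hsq i
  · linear_combination hrow j + hsq j
end

section
/- Let 0 < t < s be reals, and for a 4×4 matrix P = (p_ij) let L(P) = ∏_i p_ii^s ∏_{i≠j} p_ij^t. Let P_2 be the matrix with 2×2 diagonal blocks with entries (2s+2t)/(s+3t) and off-diagonal blocks with entries 4t/(s+3t), and let P_1 be the matrix with a 3×3 block with entries (4s+8t)/(3s+9t), border entries 12t/(3s+9t), and (4,4)-entry 12s/(3s+9t). Then L(P_2) > L(P_1). -/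
open Finset

/-- The generalized likelihood `L(P) = ∏ i p_ii^s · ∏_{i≠j} p_ij^t` (real exponents). -/
noncomputable def swissLst (s t : ℝ) (P : Matrix (Fin 4) (Fin 4) ℝ) : ℝ :=
  (∏ i, (P i i) ^ s) * ∏ p ∈ Finset.univ.offDiag, (P p.1 p.2) ^ t

lemma swissLst_eq (s t : ℝ) (P : Matrix (Fin 4) (Fin 4) ℝ) :
    swissLst s t P = (P 0 0 ^ s * P 1 1 ^ s * P 2 2 ^ s * P 3 3 ^ s) *
      (P 0 1 ^ t * P 0 2 ^ t * P 0 3 ^ t * (P 1 0 ^ t * P 1 2 ^ t * P 1 3 ^ t) *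
       (P 2 0 ^ t * P 2 1 ^ t * P 2 3 ^ t) * (P 3 0 ^ t * P 3 1 ^ t * P 3 2 ^ t)) := by
  rw [swissLst, show (Finset.univ : Finset (Fin 4)).offDiag = (Finset.univ ×ˢ Finset.univ).filter (fun p => p.1 ≠ p.2) by ext; simp [Finset.mem_offDiag], Finset.prod_filter, Finset.prod_product, Fin.prod_univ_four]
  simp [Fin.prod_univ_four]

theorem stmt_18 (s t : ℝ) (ht : 0 < t) (hts : t < s) :
    swissLst s t
      !![(4*s+8*t)/(3*s+9*t), (4*s+8*t)/(3*s+9*t), (4*s+8*t)/(3*s+9*t), 12*t/(3*s+9*t);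
         (4*s+8*t)/(3*s+9*t), (4*s+8*t)/(3*s+9*t), (4*s+8*t)/(3*s+9*t), 12*t/(3*s+9*t);
         (4*s+8*t)/(3*s+9*t), (4*s+8*t)/(3*s+9*t), (4*s+8*t)/(3*s+9*t), 12*t/(3*s+9*t);
         12*t/(3*s+9*t),      12*t/(3*s+9*t),      12*t/(3*s+9*t),      12*s/(3*s+9*t)]
    < swissLst s t
      !![(2*s+2*t)/(s+3*t), (2*s+2*t)/(s+3*t), 4*t/(s+3*t), 4*t/(s+3*t);
         (2*s+2*t)/(s+3*t), (2*s+2*t)/(s+3*t), 4*t/(s+3*t), 4*t/(s+3*t);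
         4*t/(s+3*t), 4*t/(s+3*t), (2*s+2*t)/(s+3*t), (2*s+2*t)/(s+3*t);
         4*t/(s+3*t), 4*t/(s+3*t), (2*s+2*t)/(s+3*t), (2*s+2*t)/(s+3*t)] := by
  have hs : 0 < s := ht.trans hts
  have hst : 0 < s - t := by linarith
  have hE : 0 < s + 3*t := by linarith
  have hD : 0 < 3*s + 9*t := by linarith
  have hEt : 0 < s + t := by linarith
  set a : ℝ := (4*s+8*t)/(3*s+9*t) with ha_def
  set d : ℝ := 12*s/(3*s+9*t) with hd_def
  set c : ℝ := 4*t/(s+3*t) with hc_def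
  set b : ℝ := (2*s+2*t)/(s+3*t) with hb_def
  have hc' : 12*t/(3*s+9*t) = c := by
    rw [hc_def]; rw [div_eq_div_iff hD.ne' hE.ne']; ring
  have ha : 0 < a := div_pos (by linarith) hD
  have hb : 0 < b := div_pos (by linarith) hE
  have hc : 0 < c := div_pos (by linarith) hE
  have hd : 0 < d := div_pos (by linarith) hD
  -- expand the two likelihoods
  rw [swissLst_eq, swissLst_eq]
  simp only [hc', Matrix.of_apply, Matrix.cons_val', Matrix.cons_val_zero, Matrix.cons_val_one, Matrix.head_cons,
    Matrix.cons_val_two, Matrix.cons_val_three, Matrix.tail_cons, Matrix.head_fin_const,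
    Matrix.empty_val', Matrix.cons_val_fin_one]
  -- the key logarithmic inequality
  set A : ℝ := a^3 * d / b^4 with hA_def
  set S : ℝ := a^3 / (b^2 * c) with hS_def
  have hApos : 0 < A := by positivity
  have hSpos : 0 < S := by positivity
  have h39 : 3*s+9*t = 3*(s+3*t) := by ring
  have hAval : A = 16*s*(s+2*t)^3 / (27*(s+t)^4) := by
    rw [hA_def, ha_def, hd_def, hb_def, h39]
    field_simp
    ring
  have hSval : S = 4*(s+2*t)^3 / (27*(t*(s+t)^2)) := by
    rw [hS_def, ha_def, hb_def, hc_def, h39]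
    field_simp
    ring
  have hApoly : 16*s*(s+2*t)^3 < 27*(s+t)^4 := by
    nlinarith [mul_pos (mul_pos hst hst) (show (0:ℝ) < 27*t^2+34*s*t+11*s^2 by positivity)]
  have hA1 : A < 1 := by
    rw [hAval]
    exact (div_lt_one (by positivity)).mpr hApoly
  have hlogA : Real.log A < A - 1 := Real.log_lt_sub_one_of_pos hApos (ne_of_lt hA1)
  have hlogS : Real.log S ≤ S - 1 := Real.log_le_sub_one_of_pos hSpos
  have hG : s*(A-1) + 2*t*(S-1) = (t-s)^3*(3*s+5*t)*(s+2*t) / (27*(s+t)^4) := by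
    rw [hAval, hSval]
    field_simp
    ring
  have hGle : s*(A-1) + 2*t*(S-1) ≤ 0 := by
    rw [hG]
    apply div_nonpos_of_nonpos_of_nonneg _ (by positivity)
    nlinarith [mul_pos (mul_pos (pow_pos hst 3) (show (0:ℝ) < 3*s+5*t by linarith))
      (show (0:ℝ) < s+2*t by linarith)]
  have hkey : s * Real.log A + 2*t * Real.log S < 0 := by
    have h1 : s * Real.log A < s * (A - 1) := by
      exact mul_lt_mul_of_pos_left hlogA hs
    have h2 : 2*t * Real.log S ≤ 2*t * (S - 1) :=
      mul_le_mul_of_nonneg_left hlogS (by positivity)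
    linarith
  have hlogA' : Real.log A = 3*Real.log a + Real.log d - 4*Real.log b := by
    rw [hA_def, Real.log_div (by positivity) (by positivity),
      Real.log_mul (by positivity) hd.ne', Real.log_pow, Real.log_pow]
    push_cast; ring
  have hlogS' : Real.log S = 3*Real.log a - 2*Real.log b - Real.log c := by
    rw [hS_def, Real.log_div (by positivity) (by positivity),
      Real.log_mul (by positivity) hc.ne', Real.log_pow, Real.log_pow]
    push_cast; ring
  -- rewrite powers as exponentials and conclude
  have hrw : ∀ x y : ℝ, 0 < x → x ^ y = Real.exp (y * Real.log x) := by
    intro x y hx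
    rw [Real.rpow_def_of_pos hx, mul_comm]
  rw [hrw a s ha, hrw d s hd, hrw b s hb, hrw c t hc, hrw a t ha, hrw b t hb]
  simp only [← Real.exp_add]
  rw [Real.exp_lt_exp]
  rw [hlogA', hlogS'] at hkey
  linarith
end
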